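/- arXiv:0805.4441 — 2 statements merged into one kernel-verified Lean document; each statement's English description precedes it below -/
import Mathlib

section
/- Let E(p) = sqrt(p^2 + 1) and φ0(p) = sqrt((E(p)+1)/(2E(p))). Then for all p ≥ 0, (E(p) - 1)/φ0(p)^2 ≥ sqrt(p^2 + 4) - 2, i.e. (E(p)-1)/φ0(p)^2 ≥ 2(E(p/2) - 1). -/
noncomputable def Erel (p : ℝ) : ℝ := Real.sqrt (p ^ 2 + 1)

noncomputable def phi0 (p : ℝ) : ℝ := Real.sqrt ((Erel p + 1) / (2 * Erel p))

theorem phi0_lower_bound (p : ℝ) (hp : 0 ≤ p) :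
    Real.sqrt (p ^ 2 + 4) - 2 ≤ (Erel p - 1) / (phi0 p) ^ 2 ∧
    Real.sqrt (p ^ 2 + 4) - 2 = 2 * (Erel (p / 2) - 1) := by
  have h1 : (0:ℝ) ≤ p ^ 2 + 1 := by positivity
  have hE2 : (Erel p) ^ 2 = p ^ 2 + 1 := Real.sq_sqrt h1
  have hE1 : 1 ≤ Erel p := by
    rw [show (1:ℝ) = Real.sqrt 1 by simp [Real.sqrt_one]]
    exact Real.sqrt_le_sqrt (by nlinarith)
  have hEpos : 0 < Erel p := by linarith
  have hS2 : (Real.sqrt (p ^ 2 + 4)) ^ 2 = p ^ 2 + 4 := Real.sq_sqrt (by positivity)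
  have hSE : Erel p ≤ Real.sqrt (p ^ 2 + 4) := Real.sqrt_le_sqrt (by nlinarith)
  have hphi : (phi0 p) ^ 2 = (Erel p + 1) / (2 * Erel p) := by
    apply Real.sq_sqrt
    positivity
  constructor
  · rw [hphi]
    rw [div_div_eq_mul_div]
    rw [le_div_iff₀ (by linarith)]
    nlinarith [hSE, hE1, hS2, hE2, sq_nonneg (Erel p - 1), sq_nonneg (Erel p + 1),
      mul_le_mul_of_nonneg_left hSE hEpos.le, Real.sqrt_nonneg (p ^ 2 + 4)]
  · have : Erel (p / 2) = Real.sqrt ((p / 2) ^ 2 + 1) := rfl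
    have h4 : Real.sqrt ((p ^ 2 + 4) / 4) = Real.sqrt (p ^ 2 + 4) / 2 := by
      rw [show (p ^ 2 + 4) / 4 = (Real.sqrt (p ^ 2 + 4) / 2) ^ 2 by nlinarith,
        Real.sqrt_sq (by positivity)]
    rw [this, show (p/2)^2 + 1 = (p^2+4)/4 by ring, h4]
    ring
end

section
/- Let φ0(p) = sqrt((E(p)+1)/(2E(p))) with E(p) = sqrt(p^2+1). Then for all p, q ≥ 0, (φ0(p) - φ0(q))^2 ≤ (p - q)^2 / (8 E(p)^2 E(q)^2). -/
lemma Erel_sq (p : ℝ) : (Erel p) ^ 2 = p ^ 2 + 1 :=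
  Real.sq_sqrt (by positivity)

lemma one_le_Erel (p : ℝ) : 1 ≤ Erel p := by
  rw [show (1:ℝ) = Real.sqrt 1 by simp]
  exact Real.sqrt_le_sqrt (by nlinarith [sq_nonneg p])

lemma Erel_pos (p : ℝ) : 0 < Erel p := lt_of_lt_of_le one_pos (one_le_Erel p)

lemma le_Erel (p : ℝ) (hp : 0 ≤ p) : p ≤ Erel p := by
  nlinarith [Erel_sq p, Erel_pos p]

lemma phi0_sq (p : ℝ) : (phi0 p) ^ 2 = (Erel p + 1) / (2 * Erel p) := by
  have h := Erel_pos p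
  exact Real.sq_sqrt (by positivity)

lemma phi0_ge (p : ℝ) : Real.sqrt (1/2) ≤ phi0 p := by
  apply Real.sqrt_le_sqrt
  have h := Erel_pos p
  rw [div_le_div_iff₀ (by norm_num) (by positivity)]
  nlinarith

set_option maxHeartbeats 1000000 in
theorem phi0_diff_sq_bound (p q : ℝ) (hp : 0 ≤ p) (hq : 0 ≤ q) :
    (phi0 p - phi0 q) ^ 2 ≤ (p - q) ^ 2 / (8 * (Erel p) ^ 2 * (Erel q) ^ 2) := by
  set a := phi0 p with ha
  set b := phi0 q with hb
  set E := Erel p with hE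
  set F := Erel q with hF
  have hEpos : 0 < E := Erel_pos p
  have hFpos : 0 < F := Erel_pos q
  rw [le_div_iff₀ (by positivity)]
  rcases eq_or_lt_of_le (by positivity : (0:ℝ) ≤ p + q) with hpq | hpq
  · have hp0 : p = 0 := by linarith
    have hq0 : q = 0 := by linarith
    subst hp0; subst hq0
    simp [ha, hb]
  · have ha2 : a ^ 2 = (E + 1) / (2 * E) := phi0_sq p
    have hb2 : b ^ 2 = (F + 1) / (2 * F) := phi0_sq q
    have h1 : (a ^ 2 - b ^ 2) * (2 * E * F) = F - E := by
      rw [ha2, hb2]; field_simp; ring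
    have key : (a - b) ^ 2 * ((a + b) ^ 2 * ((E + F) ^ 2 * (4 * E ^ 2 * F ^ 2))) =
        (p - q) ^ 2 * (p + q) ^ 2 := by
      have k1 : ((a - b) * (a + b)) ^ 2 * (2 * E * F) ^ 2 = (F - E) ^ 2 := by
        have e1 : (a - b) * (a + b) = a ^ 2 - b ^ 2 := by ring
        rw [e1, ← mul_pow, h1]
      have k2 : (F - E) ^ 2 * (E + F) ^ 2 = (p - q) ^ 2 * (p + q) ^ 2 := by
        have e2 : (F - E) * (E + F) = q ^ 2 - p ^ 2 := by
          nlinarith [Erel_sq p, Erel_sq q]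
        rw [← mul_pow, e2]; ring
      nlinarith [k1, k2]
    have hsq : (Real.sqrt (1/2 : ℝ)) ^ 2 = 1/2 := Real.sq_sqrt (by norm_num)
    have hab : 2 ≤ (a + b) ^ 2 := by
      have h5 : 2 * Real.sqrt (1/2 : ℝ) ≤ a + b := by
        have := phi0_ge p; have := phi0_ge q; linarith
      have h6 : (2 * Real.sqrt (1/2 : ℝ)) ^ 2 ≤ (a + b) ^ 2 :=
        pow_le_pow_left₀ (by positivity) h5 2
      nlinarith [h6, hsq]
    have hEF : (p + q) ^ 2 ≤ (E + F) ^ 2 :=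
      pow_le_pow_left₀ (by positivity)
        (add_le_add (le_Erel p hp) (le_Erel q hq)) 2
    have h3 : 2 * (p + q) ^ 2 ≤ (a + b) ^ 2 * (E + F) ^ 2 :=
      le_trans (mul_le_mul_of_nonneg_right hab (sq_nonneg _))
        (mul_le_mul_of_nonneg_left hEF (sq_nonneg _))
    have h4 : (a - b) ^ 2 * (8 * E ^ 2 * F ^ 2) * (p + q) ^ 2 ≤
        (p - q) ^ 2 * (p + q) ^ 2 := by
      calc (a - b) ^ 2 * (8 * E ^ 2 * F ^ 2) * (p + q) ^ 2
          = (a - b) ^ 2 * (4 * E ^ 2 * F ^ 2) * (2 * (p + q) ^ 2) := by ring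
        _ ≤ (a - b) ^ 2 * (4 * E ^ 2 * F ^ 2) * ((a + b) ^ 2 * (E + F) ^ 2) := by
            apply mul_le_mul_of_nonneg_left h3 (by positivity)
        _ = (p - q) ^ 2 * (p + q) ^ 2 := by linear_combination key
    exact le_of_mul_le_mul_right h4 (by positivity)
end
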